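/- Let G be a finite group with subgroups B ≤ P_J, P_K ≤ G and an element n ∈ G such that P_K n P_J = P_K n B (every (P_K, P_J)-double coset element decomposes through B on the right). Then for any x ∈ G, the number of cosets P_K h contained in P_K n P_J x equals |P_K n P_J| / |P_K|, and each coset Bg ⊆ P_K n P_J x lies in exactly one such P_K h; consequently the number of cosets Bg ⊆ BnB x contained in a fixed P_K h ⊆ P_K n P_J x is independent of the choice of h. -/

import Mathlib

/-! Because `P_K n P_J = P_K n B`, the set `D x = P_K n B x` is a union of right `P_K`-cosets,
each of size `|P_K|`, which gives the count of cosets; a coset `B g` lies in `P_K g` and in no other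
right `P_K`-coset. Every right `P_K`-coset in `D x` is `P_K n b x` with `b ∈ B`, and right
multiplication by `x⁻¹ b x` maps `B n B x` onto itself, permutes right `B`-cosets and sends
`P_K n x` to `P_K n b x`; so all these cosets contain equally many `B`-cosets of `B n B x`. -/

variable {G : Type*} [Group G]

/-- The right coset `H·g` of a subgroup `H`, as a set. -/
def rCoset (H : Subgroup G) (g : G) : Set G := (fun h => h * g) '' (H : Set G)

open MulOpposite DoubleCoset
open scoped Pointwise

section RightCosets

variable {H K : Subgroup G}

theorem rCoset_eq_op_smul (H : Subgroup G) (g : G) : rCoset H g = op g • (H : Set G) := rfl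

theorem mem_rCoset_self (H : Subgroup G) (g : G) : g ∈ rCoset H g :=
  ⟨1, H.one_mem, one_mul g⟩

theorem mul_mem_rCoset {k : G} (hk : k ∈ H) (g : G) : k * g ∈ rCoset H g :=
  ⟨k, hk, rfl⟩

theorem rCoset_eq_of_mem {g a : G} (ha : a ∈ rCoset H g) : rCoset H a = rCoset H g := by
  rw [rCoset_eq_op_smul, mem_rightCoset_iff] at ha
  rw [rCoset_eq_op_smul, rCoset_eq_op_smul, rightCoset_eq_iff]
  simpa using H.inv_mem ha

theorem rCoset_mul_left {k : G} (hk : k ∈ H) (g : G) : rCoset H (k * g) = rCoset H g :=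
  rCoset_eq_of_mem (mul_mem_rCoset hk g)

theorem rCoset_mono (hKH : K ≤ H) (g : G) : rCoset K g ⊆ rCoset H g :=
  Set.image_mono hKH

theorem op_smul_rCoset (H : Subgroup G) (g y : G) : op y • rCoset H g = rCoset H (g * y) := by
  rw [rCoset_eq_op_smul, rCoset_eq_op_smul, smul_smul, ← op_mul]

theorem ncard_rCoset (H : Subgroup G) (g : G) : (rCoset H g).ncard = Nat.card H := by
  rw [← Nat.card_coe_set_eq, rCoset_eq_op_smul, Nat.card_congr (Subgroup.rightCosetEquivSubgroup g)]

def rCosetsIn (H : Subgroup G) (S : Set G) : Set (Set G) :=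
  {s | (∃ h, s = rCoset H h) ∧ s ⊆ S}

theorem ncard_rCosetsIn_mul_card_eq_ncard [Finite G] {S : Set G} (hS : ∀ a ∈ S, rCoset H a ⊆ S) :
    (rCosetsIn H S).ncard * Nat.card H = S.ncard := by
  have hunion : ⋃ s ∈ rCosetsIn H S, s = S := by
    refine subset_antisymm (Set.iUnion₂_subset fun s hs => hs.2) fun a ha => ?_
    exact Set.mem_biUnion ⟨⟨a, rfl⟩, hS a ha⟩ (mem_rCoset_self H a)
  have hdisj : (rCosetsIn H S).PairwiseDisjoint id := by
    rintro _ ⟨⟨g₁, rfl⟩, -⟩ _ ⟨⟨g₂, rfl⟩, -⟩ hne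
    refine Set.disjoint_left.mpr fun a ha₁ ha₂ => hne ?_
    rw [← rCoset_eq_of_mem ha₁, ← rCoset_eq_of_mem ha₂]
  calc (rCosetsIn H S).ncard * Nat.card H
      = ∑ᶠ s ∈ rCosetsIn H S, s.ncard := by
        rw [← finsum_one, finsum_mem_mul]
        refine finsum_mem_congr rfl fun s ⟨⟨g, hg⟩, _⟩ => ?_
        rw [hg, ncard_rCoset, one_mul]
    _ = (⋃ s ∈ rCosetsIn H S, s).ncard :=
        ((Set.toFinite _).ncard_biUnion (fun _ _ => Set.toFinite _) hdisj).symm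
    _ = S.ncard := by rw [hunion]

theorem existsUnique_rCoset_superset (hKH : K ≤ H) {S : Set G}
    (hS : ∀ a ∈ S, rCoset H a ⊆ S) {g : G} (hg : rCoset K g ⊆ S) :
    ∃! s : Set G, (∃ h, s = rCoset H h) ∧ s ⊆ S ∧ rCoset K g ⊆ s := by
  refine ⟨rCoset H g, ⟨⟨g, rfl⟩, hS g (hg (mem_rCoset_self K g)), rCoset_mono hKH g⟩, ?_⟩
  rintro _ ⟨⟨h, rfl⟩, -, hgh⟩
  exact (rCoset_eq_of_mem (hgh (mem_rCoset_self K g))).symm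

theorem rCosetsIn_op_smul (H : Subgroup G) (S : Set G) (y : G) :
    rCosetsIn H (op y • S) = (op y • ·) '' rCosetsIn H S := by
  ext s
  constructor
  · rintro ⟨⟨h, rfl⟩, hs⟩
    refine ⟨rCoset H (h * y⁻¹), ⟨⟨_, rfl⟩, ?_⟩, ?_⟩
    · rwa [Set.subset_smul_set_iff, ← op_inv, op_smul_rCoset] at hs
    · change op y • rCoset H (h * y⁻¹) = rCoset H h
      rw [op_smul_rCoset, inv_mul_cancel_right]
  · rintro ⟨_, ⟨⟨h, rfl⟩, hs⟩, rfl⟩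
    exact ⟨⟨h * y, op_smul_rCoset H h y⟩, Set.smul_set_mono hs⟩

theorem ncard_rCosetsIn_op_smul (H : Subgroup G) (S : Set G) (y : G) :
    (rCosetsIn H (op y • S)).ncard = (rCosetsIn H S).ncard := by
  rw [rCosetsIn_op_smul]
  exact Set.ncard_image_of_injective _ (MulAction.injective (op y))

theorem ncard_rCosetsIn_inter_rCoset_mul {T : Set G} {y : G} (hT : op y • T = T) (h : G) :
    (rCosetsIn K (T ∩ rCoset H (h * y))).ncard = (rCosetsIn K (T ∩ rCoset H h)).ncard := by
  rw [← op_smul_rCoset, ← hT, ← Set.smul_set_inter, hT, ncard_rCosetsIn_op_smul]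

end RightCosets

section DoubleCosets

variable {H K L M : Subgroup G}

theorem op_smul_doubleCoset_of_mem (a : G) {k : G} (hk : k ∈ K) :
    op k • doubleCoset a M K = doubleCoset a M K := by
  ext g
  simp only [mem_rightCoset_iff, mem_doubleCoset]
  constructor
  · rintro ⟨m, hm, k', hk', e⟩
    exact ⟨m, hm, k' * k, K.mul_mem hk' hk, by rw [← mul_assoc, ← e, inv_mul_cancel_right]⟩
  · rintro ⟨m, hm, k', hk', rfl⟩
    exact ⟨m, hm, k' * k⁻¹, K.mul_mem hk' (K.inv_mem hk), by group⟩

theorem ncard_rCosetsIn_doubleCoset_inter_rCoset {a b : G} (ha : a ∈ H) (hb : b ∈ K) (n x : G) :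
    (rCosetsIn L (op x • doubleCoset n M K ∩ rCoset H (a * n * b * x))).ncard =
      (rCosetsIn L (op x • doubleCoset n M K ∩ rCoset H (n * x))).ncard := by
  have hinv : op (x⁻¹ * b * x) • op x • doubleCoset n M K = op x • doubleCoset n M K := by
    rw [smul_smul, ← op_mul, show x * (x⁻¹ * b * x) = b * x by group, op_mul, ← smul_smul,
      op_smul_doubleCoset_of_mem n hb]
  rw [show a * n * b * x = a * (n * x * (x⁻¹ * b * x)) by group, rCoset_mul_left ha,
    ncard_rCosetsIn_inter_rCoset_mul hinv]

end DoubleCosets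

theorem stmt17_general [Finite G] (B PK : Subgroup G)
    (hBK : B ≤ PK) (n : G)
    (D : Set G)
    (hDB : D = {g | ∃ a ∈ PK, ∃ b ∈ B, g = a * n * b})
    (x : G)
    (Dx : Set G) (hDx : Dx = (fun g => g * x) '' D)
    (BnBx : Set G) (hBnBx : BnBx = {g | ∃ b₁ ∈ B, ∃ b₂ ∈ B, g = b₁ * n * b₂ * x}) :
    (Nat.card {s : Set G | (∃ h, s = rCoset PK h) ∧ s ⊆ Dx} =
        Nat.card D / Nat.card PK) ∧
    (∀ g : G, rCoset B g ⊆ Dx →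
        ∃! s : Set G, (∃ h, s = rCoset PK h) ∧ s ⊆ Dx ∧ rCoset B g ⊆ s) ∧
    (∀ h₁ h₂ : G, rCoset PK h₁ ⊆ Dx → rCoset PK h₂ ⊆ Dx →
        Nat.card {s : Set G | (∃ g, s = rCoset B g) ∧ s ⊆ BnBx ∧ s ⊆ rCoset PK h₁} =
        Nat.card {s : Set G | (∃ g, s = rCoset B g) ∧ s ⊆ BnBx ∧ s ⊆ rCoset PK h₂}) := by
  have hmemDx : ∀ g, g ∈ Dx ↔ ∃ a ∈ PK, ∃ b ∈ B, g = a * n * b * x := by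
    intro g
    simp [hDx, hDB, mul_inv_eq_iff_eq_mul]
  have hDx_union : ∀ a ∈ Dx, rCoset PK a ⊆ Dx := by
    rintro h hh _ ⟨k, hk, rfl⟩
    obtain ⟨a, ha, b, hb, rfl⟩ := (hmemDx h).1 hh
    exact (hmemDx _).2 ⟨k * a, PK.mul_mem hk ha, b, hb, by simp only [mul_assoc]⟩
  have hBnBx_eq : BnBx = op x • doubleCoset n B B := by
    ext g
    simp [hBnBx, mem_rightCoset_iff, mem_doubleCoset, mul_inv_eq_iff_eq_mul]
  have hcount : ∀ h ∈ Dx, (rCosetsIn B (BnBx ∩ rCoset PK h)).ncard =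
      (rCosetsIn B (BnBx ∩ rCoset PK (n * x))).ncard := by
    intro h hh
    obtain ⟨a, ha, b, hb, rfl⟩ := (hmemDx h).1 hh
    rw [hBnBx_eq, ncard_rCosetsIn_doubleCoset_inter_rCoset ha hb]
  refine ⟨?_, fun g hg => existsUnique_rCoset_superset hBK hDx_union hg, ?_⟩
  · have hcard : Nat.card D = Nat.card Dx := by
      rw [hDx, Nat.card_image_of_injective (mul_left_injective x)]
    rw [hcard, Nat.card_coe_set_eq, Nat.card_coe_set_eq]
    exact Nat.eq_div_of_mul_eq_left Nat.card_pos.ne' (ncard_rCosetsIn_mul_card_eq_ncard hDx_union)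
  · intro h₁ h₂ hs₁ hs₂
    simp only [← Set.subset_inter_iff]
    rw [Nat.card_coe_set_eq, Nat.card_coe_set_eq]
    exact (hcount h₁ (hs₁ (mem_rCoset_self PK h₁))).trans
      (hcount h₂ (hs₂ (mem_rCoset_self PK h₂))).symm

/-- Let `G` be a finite group, `B ≤ P_J`, `B ≤ P_K` subgroups, and
`n ∈ G` with `P_K n P_J = P_K n B`.  Then for any `x ∈ G`:
(1) the number of cosets `P_K h ⊆ P_K n P_J x` equals `|P_K n P_J| / |P_K|`;
(2) each coset `Bg ⊆ P_K n P_J x` lies in exactly one such coset `P_K h`;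
(3) the number of cosets `Bg ⊆ BnBx` contained in a fixed `P_K h ⊆ P_K n P_J x`
is independent of the choice of `h`. -/
theorem stmt17 [Finite G] (B PJ PK : Subgroup G)
    (hBJ : B ≤ PJ) (hBK : B ≤ PK) (n : G)
    (D : Set G) (hD : D = {g | ∃ a ∈ PK, ∃ b ∈ PJ, g = a * n * b})
    (hDB : D = {g | ∃ a ∈ PK, ∃ b ∈ B, g = a * n * b})
    (x : G)
    (Dx : Set G) (hDx : Dx = (fun g => g * x) '' D)
    (BnBx : Set G) (hBnBx : BnBx = {g | ∃ b₁ ∈ B, ∃ b₂ ∈ B, g = b₁ * n * b₂ * x}) :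
    (Nat.card {s : Set G | (∃ h, s = rCoset PK h) ∧ s ⊆ Dx} =
        Nat.card D / Nat.card PK) ∧
    (∀ g : G, rCoset B g ⊆ Dx →
        ∃! s : Set G, (∃ h, s = rCoset PK h) ∧ s ⊆ Dx ∧ rCoset B g ⊆ s) ∧
    (∀ h₁ h₂ : G, rCoset PK h₁ ⊆ Dx → rCoset PK h₂ ⊆ Dx →
        Nat.card {s : Set G | (∃ g, s = rCoset B g) ∧ s ⊆ BnBx ∧ s ⊆ rCoset PK h₁} =
        Nat.card {s : Set G | (∃ g, s = rCoset B g) ∧ s ⊆ BnBx ∧ s ⊆ rCoset PK h₂}) :=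
  stmt17_general B PK hBK n D hDB x Dx hDx BnBx hBnBx
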